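/- arXiv:2508.12371 — 5 statements merged into one kernel-verified Lean document; each statement's English description precedes it below -/
import Mathlib

section
/- Let N_c and N_e be natural numbers with 0 ≤ N_e ≤ N_c and N_c ≥ 1, and let p ∈ {0, 1, …, N_c−1}. Then Σ_{k=0, k≠p}^{N_c−1} Σ_{i=N_e}^{N_c−1} Σ_{r=N_e}^{N_c−1} exp( 2πi (k − p)(i − r) / N_c ) = N_e (N_c − N_e), where exp denotes the complex exponential and i the imaginary unit. -/
/-!
With `ζ = exp (2πi / N_c)` the summand is `ζ ^ ((k - p)(i - r))`. Summing over `k` first,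
orthogonality of the characters of `ℤ / N_c` (using `|i - r| < N_c`) gives `N_c - 1` on the
diagonal `i = r` and `-1` off it, so the total is `(N_c - N_e) N_c - (N_c - N_e)²`.
-/

open Finset Complex

namespace IsPrimitiveRoot

variable {K : Type*} [Field K] {ζ : K} {n : ℕ}

theorem sum_range_zpow_sub_mul_eq_zero (hζ : IsPrimitiveRoot ζ n) (p : ℤ) {m : ℤ}
    (hm : ¬(n : ℤ) ∣ m) : ∑ k ∈ range n, ζ ^ (((k : ℤ) - p) * m) = 0 := by
  obtain rfl | hn := eq_or_ne n 0
  · simp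
  have hζm : ζ ^ m ≠ 1 := (hζ.zpow_eq_one_iff_dvd m).not.mpr hm
  have hζmn : (ζ ^ m) ^ n = 1 := by
    rw [← zpow_natCast, ← zpow_mul, mul_comm, zpow_mul, hζ.zpow_eq_one, one_zpow]
  have hterm (k : ℕ) : ζ ^ (((k : ℤ) - p) * m) = ζ ^ (-p * m) * (ζ ^ m) ^ k := by
    rw [← zpow_natCast, ← zpow_mul, ← zpow_add₀ (hζ.ne_zero hn)]
    ring_nf
  rw [sum_congr rfl fun k _ => hterm k, ← mul_sum, geom_sum_eq hζm, hζmn, sub_self, zero_div,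
    mul_zero]

theorem sum_range_zpow_sub_mul_sub (hζ : IsPrimitiveRoot ζ n) (p : ℤ) {i r : ℕ} (hi : i < n)
    (hr : r < n) :
    ∑ k ∈ range n, ζ ^ (((k : ℤ) - p) * ((i : ℤ) - r)) = if i = r then (n : K) else 0 := by
  split_ifs with hir
  · simp [hir]
  · refine hζ.sum_range_zpow_sub_mul_eq_zero p fun hdvd => hir ?_
    have := Int.eq_zero_of_abs_lt_dvd hdvd (abs_lt.mpr ⟨by omega, by omega⟩)
    omega

theorem sum_erase_zpow_sub_mul_sub (hζ : IsPrimitiveRoot ζ n) {p i r : ℕ} (hp : p < n)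
    (hi : i < n) (hr : r < n) :
    ∑ k ∈ (range n).erase p, ζ ^ (((k : ℤ) - p) * ((i : ℤ) - r)) =
      if i = r then (n : K) - 1 else -1 := by
  rw [sum_erase_eq_sub (mem_range.mpr hp), hζ.sum_range_zpow_sub_mul_sub p hi hr, sub_self,
    zero_mul, zpow_zero]
  split_ifs <;> ring

end IsPrimitiveRoot

theorem Finset.sum_sum_ite_eq_sub_one {ι R : Type*} [CommRing R] [DecidableEq ι] (s : Finset ι)
    (a : R) : ∑ i ∈ s, ∑ r ∈ s, (if i = r then a - 1 else -1) = #s * (a - #s) := by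
  have hrow : ∀ i ∈ s, ∑ r ∈ s, (if i = r then a - 1 else -1) = a - #s := by
    intro i hi
    simp_rw [show ∀ r, (if i = r then a - 1 else -1) = (if i = r then a else 0) - 1 by
      intro r; split_ifs <;> ring]
    rw [sum_sub_distrib, sum_ite_eq, if_pos hi, sum_const, nsmul_one]
  rw [sum_congr rfl hrow, sum_const, nsmul_eq_mul]

theorem stmt_5_general (Nc Ne : ℕ) (hNe : Ne ≤ Nc) (p : ℕ) (hp : p < Nc) :
    ∑ k ∈ (Finset.range Nc).erase p, ∑ i ∈ Finset.Ico Ne Nc, ∑ r ∈ Finset.Ico Ne Nc,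
        Complex.exp (2 * Real.pi * Complex.I * ((k : ℂ) - (p : ℂ)) * ((i : ℂ) - (r : ℂ)) / (Nc : ℂ))
      = (Ne : ℂ) * ((Nc : ℂ) - (Ne : ℂ)) := by
  set ζ := exp (2 * Real.pi * I / Nc)
  have hζ : IsPrimitiveRoot ζ Nc := isPrimitiveRoot_exp Nc (by omega)
  have hterm (k i r : ℕ) : exp (2 * Real.pi * I * ((k : ℂ) - p) * ((i : ℂ) - r) / Nc) =
      ζ ^ (((k : ℤ) - p) * ((i : ℤ) - r)) := by
    rw [← exp_int_mul]
    push_cast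
    ring_nf
  calc _ = ∑ i ∈ Ico Ne Nc, ∑ r ∈ Ico Ne Nc, ∑ k ∈ (range Nc).erase p,
        ζ ^ (((k : ℤ) - p) * ((i : ℤ) - r)) := by
        simp only [hterm]
        rw [sum_comm]
        exact sum_congr rfl fun _ _ => sum_comm
    _ = ∑ i ∈ Ico Ne Nc, ∑ r ∈ Ico Ne Nc, if i = r then (Nc : ℂ) - 1 else -1 :=
        sum_congr rfl fun i hi => sum_congr rfl fun r hr =>
          hζ.sum_erase_zpow_sub_mul_sub hp (mem_Ico.mp hi).2 (mem_Ico.mp hr).2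
    _ = _ := by
        rw [sum_sum_ite_eq_sub_one, Nat.card_Ico, Nat.cast_sub hNe]
        ring

/-- Exponential sum identity (Appendix C, ICI power):
`∑_{k≠p} ∑_{i=N_e}^{N_c−1} ∑_{r=N_e}^{N_c−1} exp(2πi(k−p)(i−r)/N_c) = N_e (N_c − N_e)`. -/
theorem stmt_5 (Nc Ne : ℕ) (hNe : Ne ≤ Nc) (hNc : 1 ≤ Nc) (p : ℕ) (hp : p < Nc) :
    ∑ k ∈ (Finset.range Nc).erase p, ∑ i ∈ Finset.Ico Ne Nc, ∑ r ∈ Finset.Ico Ne Nc,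
        Complex.exp (2 * Real.pi * Complex.I * ((k : ℂ) - (p : ℂ)) * ((i : ℂ) - (r : ℂ)) / (Nc : ℂ))
      = (Ne : ℂ) * ((Nc : ℂ) - (Ne : ℂ)) :=
  stmt_5_general Nc Ne hNe p hp
end

section
/- Let N_c ≥ 1 and 1 ≤ N_e ≤ N_c be natural numbers and p an integer. Let S_0, …, S_{N_c−1} : Ω → ℂ be independent complex random variables with E[S_k] = 0 and E[|S_k|²] = ρ for all k, let c_0, …, c_{N_c−1} ∈ ℂ satisfy |c_k| = 1, and let α ∈ ℂ. Define I_s = (α / N_c) Σ_{i=0}^{N_e−1} Σ_{k=0}^{N_c−1} S_k c_k exp( 2πi (k − p) i / N_c ). Then E[|I_s|²] = (N_e / N_c) |α|² ρ. -/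
/-!
Writing `I_s = (α / N_c) ∑_k c_k D_k S_k` with `D_k = ∑_{i < N_e} exp (2πi (k - p) i / N_c)`,
independence and zero means make the `S_k` orthogonal in `L²`, so
`E|I_s|² = |α|² ρ / N_c² · ∑_k |D_k|²`. Expanding `|D_k|²` and summing over `k` first,
orthogonality of the characters of `ℤ / N_c` kills every pair `i ≠ j`, because distinct
`i, j < N_e ≤ N_c` stay distinct modulo `N_c`; hence `∑_k |D_k|² = N_e N_c`.
-/

open MeasureTheory ProbabilityTheory Finset ComplexConjugate

lemma ProbabilityTheory.IndepFun.integral_mul_conj_eq_zero {Ω : Type*} [MeasurableSpace Ω]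
    {P : Measure Ω} {X Y : Ω → ℂ} (hXY : IndepFun X Y P) (hX : AEMeasurable X P)
    (hY : AEMeasurable Y P) (hX0 : ∫ ω, X ω ∂P = 0) :
    ∫ ω, X ω * conj (Y ω) ∂P = 0 :=
  (hXY.integral_fun_comp_mul_comp (f := id) hX hY aestronglyMeasurable_id
    Complex.continuous_conj.aestronglyMeasurable).trans (by simp [hX0])

theorem integral_norm_sum_mul_sq_of_indepFun {Ω ι : Type*} [MeasurableSpace Ω] {P : Measure Ω}
    [Fintype ι] {X : ι → Ω → ℂ} (hindep : Pairwise fun i j ↦ IndepFun (X i) (X j) P)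
    (hL2 : ∀ i, MemLp (X i) 2 P) (hmean : ∀ i, ∫ ω, X i ω ∂P = 0) (a : ι → ℂ) :
    ∫ ω, ‖∑ i, a i * X i ω‖ ^ 2 ∂P = ∑ i, ‖a i‖ ^ 2 * ∫ ω, ‖X i ω‖ ^ 2 ∂P := by
  classical
  have hint (i j : ι) : Integrable (fun ω ↦ a i * X i ω * conj (a j * X j ω)) P := by
    simpa [mul_mul_mul_comm] using
      ((hL2 i).integrable_mul (hL2 j).star).const_mul (a i * conj (a j))
  have hcross (i j : ι) : ∫ ω, a i * X i ω * conj (a j * X j ω) ∂P =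
      if i = j then ((‖a i‖ ^ 2 * ∫ ω, ‖X i ω‖ ^ 2 ∂P : ℝ) : ℂ) else 0 := by
    split_ifs with hij
    · subst hij
      have hsq : (fun ω ↦ a i * X i ω * conj (a i * X i ω)) =
          fun ω ↦ ((‖a i‖ ^ 2 * ‖X i ω‖ ^ 2 : ℝ) : ℂ) := by
        ext ω
        rw [Complex.mul_conj', norm_mul]
        push_cast
        ring
      rw [hsq, integral_complex_ofReal, integral_const_mul]
    · have hsplit : (fun ω ↦ a i * X i ω * conj (a j * X j ω)) =
          fun ω ↦ a i * conj (a j) * (X i ω * conj (X j ω)) := by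
        ext ω
        rw [map_mul]
        ring
      rw [hsplit, integral_const_mul, (hindep hij).integral_mul_conj_eq_zero
        (hL2 i).aemeasurable (hL2 j).aemeasurable (hmean i), mul_zero]
  apply Complex.ofReal_injective
  rw [← integral_complex_ofReal]
  simp_rw [Complex.ofReal_pow, ← Complex.mul_conj', map_sum, sum_mul_sum]
  rw [integral_finsetSum _ fun i _ ↦ integrable_finsetSum _ fun j _ ↦ hint i j]
  simp_rw [integral_finsetSum _ fun j _ ↦ hint _ j, hcross, sum_ite_eq, mem_univ, if_true]
  push_cast
  rfl

theorem ZMod.sum_norm_sq_sum_range_stdAddChar_mul {n m : ℕ} [NeZero n] (hm : m ≤ n) :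
    ∑ x : ZMod n, ‖∑ i ∈ range m, stdAddChar (x * (i : ZMod n))‖ ^ 2 = m * n := by
  classical
  have horth (i j : ℕ) :
      ∑ x : ZMod n, stdAddChar (x * (i : ZMod n)) * conj (stdAddChar (x * (j : ZMod n))) =
        if (i : ZMod n) = j then (n : ℂ) else 0 := by
    simp_rw [← AddChar.map_neg_eq_conj, ← AddChar.map_add_eq_mul, ← mul_neg, ← mul_add,
      AddChar.sum_mulShift _ (isPrimitive_stdAddChar n), ← sub_eq_add_neg, sub_eq_zero, card,
      Nat.cast_ite, Nat.cast_zero]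
  have hcast {i j : ℕ} (hi : i ∈ range m) (hj : j ∈ range m) : (i : ZMod n) = j ↔ i = j := by
    rw [ZMod.natCast_eq_natCast_iff', Nat.mod_eq_of_lt (by grind), Nat.mod_eq_of_lt (by grind)]
  apply Complex.ofReal_injective
  push_cast
  simp_rw [← Complex.mul_conj', map_sum, sum_mul_sum]
  calc ∑ x : ZMod n, ∑ i ∈ range m, ∑ j ∈ range m,
        stdAddChar (x * (i : ZMod n)) * conj (stdAddChar (x * (j : ZMod n)))
      = ∑ i ∈ range m, ∑ j ∈ range m,
          ∑ x : ZMod n, stdAddChar (x * (i : ZMod n)) * conj (stdAddChar (x * (j : ZMod n))) := by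
        rw [sum_comm]
        exact sum_congr rfl fun i _ ↦ sum_comm
    _ = ∑ i ∈ range m, ∑ j ∈ range m, if i = j then (n : ℂ) else 0 :=
        sum_congr rfl fun i hi ↦ sum_congr rfl fun j hj ↦ by
          rw [horth, if_congr (hcast hi hj) rfl rfl]
    _ = m * n := by simp +contextual

theorem sum_fin_norm_sq_sum_range_exp {n m : ℕ} [NeZero n] (hm : m ≤ n) (p : ℤ) :
    ∑ k : Fin n, ‖∑ i ∈ range m,
      Complex.exp (2 * Real.pi * Complex.I * (((k : ℕ) : ℂ) - p) * i / n)‖ ^ 2 = m * n := by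
  have hexp (k : Fin n) (i : ℕ) :
      Complex.exp (2 * Real.pi * Complex.I * (((k : ℕ) : ℂ) - p) * i / n) =
        ZMod.stdAddChar ((((k : ℕ) : ZMod n) - (p : ZMod n)) * (i : ZMod n)) := by
    rw [show (((k : ℕ) : ZMod n) - (p : ZMod n)) * (i : ZMod n) = (((k : ℤ) - p) * i : ℤ) by
      push_cast; ring, ZMod.stdAddChar_coe]
    push_cast
    ring_nf
  have hbij : Function.Bijective fun k : Fin n ↦ ((k : ℕ) : ZMod n) - (p : ZMod n) := by
    refine (Fintype.bijective_iff_injective_and_card _).2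
      ⟨fun k l hkl ↦ ?_, ZMod.card n |>.symm ▸ Fintype.card_fin n⟩
    rw [sub_left_inj, ZMod.natCast_eq_natCast_iff', Nat.mod_eq_of_lt k.2,
      Nat.mod_eq_of_lt l.2] at hkl
    exact Fin.ext hkl
  simp_rw [hexp]
  exact (Fintype.sum_bijective _ hbij _ _ fun _ ↦ rfl).trans
    (ZMod.sum_norm_sq_sum_range_stdAddChar_mul hm)

theorem stmt_6_general {Ω : Type*} [MeasurableSpace Ω] (P : Measure Ω)
    (Nc Ne : ℕ) (hNc : 1 ≤ Nc) (hNe2 : Ne ≤ Nc) (p : ℤ)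
    (S : Fin Nc → Ω → ℂ) (ρ : ℝ)
    (hindep : iIndepFun S P)
    (hL2 : ∀ k, MemLp (S k) 2 P)
    (hmean : ∀ k, ∫ ω, S k ω ∂P = 0)
    (hpow : ∀ k, ∫ ω, ‖S k ω‖ ^ 2 ∂P = ρ)
    (c : Fin Nc → ℂ) (hc : ∀ k, ‖c k‖ = 1) (α : ℂ) :
    (∫ ω, ‖(α / (Nc : ℂ)) * ∑ i ∈ Finset.range Ne, ∑ k : Fin Nc,
        S k ω * c k * Complex.exp (2 * Real.pi * Complex.I * (((k : ℕ) : ℂ) - (p : ℂ)) * (i : ℂ) / (Nc : ℂ))‖ ^ 2 ∂P)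
      = ((Ne : ℝ) / (Nc : ℝ)) * ‖α‖ ^ 2 * ρ := by
  have : NeZero Nc := ⟨by omega⟩
  set D : Fin Nc → ℂ := fun k ↦ ∑ i ∈ range Ne,
    Complex.exp (2 * Real.pi * Complex.I * (((k : ℕ) : ℂ) - (p : ℂ)) * (i : ℂ) / (Nc : ℂ))
  have hI (ω : Ω) : ∑ i ∈ range Ne, ∑ k : Fin Nc, S k ω * c k *
      Complex.exp (2 * Real.pi * Complex.I * (((k : ℕ) : ℂ) - (p : ℂ)) * (i : ℂ) / (Nc : ℂ)) =
        ∑ k, c k * D k * S k ω := by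
    rw [sum_comm]
    refine sum_congr rfl fun k _ ↦ ?_
    rw [mul_sum, sum_mul]
    exact sum_congr rfl fun i _ ↦ by ring
  simp_rw [hI, norm_mul, mul_pow]
  rw [integral_const_mul,
    integral_norm_sum_mul_sq_of_indepFun (fun k j hkj ↦ hindep.indepFun hkj) hL2 hmean]
  simp_rw [hpow, norm_mul, mul_pow, hc, one_pow, one_mul, ← sum_mul, D,
    sum_fin_norm_sq_sum_range_exp hNe2 p, norm_div, Complex.norm_natCast]
  field_simp

/-- Power of the ISI term (equation (20)): with i.i.d. zero-mean symbols `S k` of power `ρ`,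
unit-modulus phases `c k` and gain `α / N_c`,
`E[|I_s|²] = (N_e/N_c) |α|² ρ` where
`I_s = (α/N_c) ∑_{i<N_e} ∑_{k<N_c} S_k c_k exp(2πi(k−p)i/N_c)`. -/
theorem stmt_6 {Ω : Type*} [MeasurableSpace Ω] (P : Measure Ω) [IsProbabilityMeasure P]
    (Nc Ne : ℕ) (hNc : 1 ≤ Nc) (hNe1 : 1 ≤ Ne) (hNe2 : Ne ≤ Nc) (p : ℤ)
    (S : Fin Nc → Ω → ℂ) (ρ : ℝ)
    (hmeas : ∀ k, Measurable (S k))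
    (hindep : iIndepFun S P)
    (hL2 : ∀ k, MemLp (S k) 2 P)
    (hmean : ∀ k, ∫ ω, S k ω ∂P = 0)
    (hpow : ∀ k, ∫ ω, ‖S k ω‖ ^ 2 ∂P = ρ)
    (c : Fin Nc → ℂ) (hc : ∀ k, ‖c k‖ = 1) (α : ℂ) :
    (∫ ω, ‖(α / (Nc : ℂ)) * ∑ i ∈ Finset.range Ne, ∑ k : Fin Nc,
        S k ω * c k * Complex.exp (2 * Real.pi * Complex.I * (((k : ℕ) : ℂ) - (p : ℂ)) * (i : ℂ) / (Nc : ℂ))‖ ^ 2 ∂P)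
      = ((Ne : ℝ) / (Nc : ℝ)) * ‖α‖ ^ 2 * ρ :=
  stmt_6_general P Nc Ne hNc hNe2 p S ρ hindep hL2 hmean hpow c hc α
end

section
/- Let N_c ≥ 1 and 0 ≤ N_e ≤ N_c be natural numbers and p ∈ {0, …, N_c−1}. Let S_0, …, S_{N_c−1} : Ω → ℂ be independent complex random variables with E[S_k] = 0 and E[|S_k|²] = ρ for all k, let d_0, …, d_{N_c−1} ∈ ℂ satisfy |d_k| = 1, and let α ∈ ℂ. Define I_c = (α / N_c) Σ_{i=N_e}^{N_c−1} Σ_{k=0, k≠p}^{N_c−1} S_k d_k exp( 2πi (k − p) i / N_c ). Then E[|I_c|²] = (N_e / N_c)(1 − N_e / N_c) |α|² ρ. -/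
/-!
Expanding the square, independence and the zero means kill the cross terms, so
`E|∑ a_k S_k|² = ρ ∑ |a_k|²`. Here `a_k = (α/N_c) d_k c_k` with
`c_k = ∑_{i=N_e}^{N_c-1} exp(2πi(k-p)i/N_c)`, the DFT of the indicator of `{N_e, …, N_c-1}`
twisted by a unit phase, so Parseval gives `∑_k |c_k|² = N_c (N_c - N_e)`; removing
`|c_p|² = (N_c - N_e)²` leaves `N_e (N_c - N_e)`.
-/

open MeasureTheory ProbabilityTheory Finset Complex
open scoped Real
open scoped ComplexConjugate

theorem sum_exp_mul_conj_exp_eq_ite {N : ℕ} (hN : N ≠ 0) {i j : ℕ} (hi : i < N) (hj : j < N) :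
    ∑ k : Fin N,
        exp (2 * π * I * (k : ℕ) * i / N) * conj (exp (2 * π * I * (k : ℕ) * j / N))
      = if i = j then (N : ℂ) else 0 := by
  set ζ := exp (2 * π * I / N)
  have hζ : IsPrimitiveRoot ζ N := isPrimitiveRoot_exp N hN
  have hexp (k m : ℕ) : exp (2 * π * I * k * m / N) = (ζ ^ m) ^ k := by
    rw [← pow_mul, ← exp_nat_mul]; push_cast; ring_nf
  have hconj (k m : ℕ) : conj (exp (2 * π * I * k * m / N)) = ((ζ ^ m) ^ k)⁻¹ := by
    rw [← exp_conj, ← hexp, ← exp_neg]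
    simp only [map_div₀, map_mul, map_ofNat, conj_ofReal, conj_I, map_natCast]
    ring_nf
  simp_rw [hconj, hexp, ← div_eq_mul_inv, ← div_pow]
  rw [Fin.sum_univ_eq_sum_range (fun k => (ζ ^ i / ζ ^ j) ^ k)]
  have hζj : ζ ^ j ≠ 0 := pow_ne_zero _ (hζ.ne_zero hN)
  split_ifs with hij
  · simp [hij, hζj]
  · have hw : ζ ^ i / ζ ^ j ≠ 1 := fun h =>
      hij (hζ.pow_inj hi hj ((div_eq_one_iff_eq hζj).1 h))
    rw [geom_sum_eq hw, div_pow, ← pow_mul, ← pow_mul, mul_comm i, mul_comm j, pow_mul, pow_mul,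
      hζ.pow_eq_one]
    simp

theorem sum_norm_sq_sum_mul_exp {N : ℕ} (hN : N ≠ 0) (s : Finset ℕ) (hs : ∀ i ∈ s, i < N)
    (f : ℕ → ℂ) :
    ∑ k : Fin N, ‖∑ i ∈ s, f i * exp (2 * π * I * (k : ℕ) * i / N)‖ ^ 2
      = N * ∑ i ∈ s, ‖f i‖ ^ 2 := by
  apply ofReal_injective
  push_cast
  simp_rw [← mul_conj', map_sum, map_mul, sum_mul_sum]
  calc _ = ∑ i ∈ s, ∑ j ∈ s, f i * conj (f j) * ∑ k : Fin N,
          exp (2 * π * I * (k : ℕ) * i / N) * conj (exp (2 * π * I * (k : ℕ) * j / N)) := by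
        rw [sum_comm]
        refine sum_congr rfl fun i _ => ?_
        rw [sum_comm]
        simp_rw [mul_sum]
        refine sum_congr rfl fun j _ => sum_congr rfl fun k _ => by ring
    _ = ∑ i ∈ s, ∑ j ∈ s, f i * conj (f j) * if i = j then (N : ℂ) else 0 :=
        sum_congr rfl fun i hi => sum_congr rfl fun j hj => by
          rw [sum_exp_mul_conj_exp_eq_ite hN (hs i hi) (hs j hj)]
    _ = N * ∑ i ∈ s, f i * conj (f i) := by
        simp [sum_ite_eq, mul_sum, mul_comm]

theorem sum_erase_norm_sq_sum_Ico_exp {N Ne : ℕ} (hNe : Ne ≤ N) (p : Fin N) :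
    ∑ k ∈ univ.erase p,
        ‖∑ i ∈ Ico Ne N, exp (2 * π * I * ((k : ℕ) - (p : ℕ) : ℂ) * i / N)‖ ^ 2
      = Ne * (N - Ne) := by
  have hN : N ≠ 0 := p.pos.ne'
  have hshift (k i : ℕ) : exp (2 * π * I * ((k : ℂ) - (p : ℕ)) * i / N)
      = exp (-(2 * π * I * (p : ℕ) * i / N)) * exp (2 * π * I * k * i / N) := by
    rw [← exp_add]; ring_nf
  have hparseval := sum_norm_sq_sum_mul_exp hN (Ico Ne N) (fun i hi => (mem_Ico.1 hi).2)
    (fun i => exp (-(2 * π * I * (p : ℕ) * i / N)))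
  have hunit (i : ℕ) : ‖exp (-(2 * π * I * (p : ℕ) * i / N))‖ = 1 := by
    rw [norm_exp]; simp
  have hp : ∑ i ∈ Ico Ne N, exp (2 * π * I * (((p : ℕ) : ℂ) - ((p : ℕ) : ℂ)) * i / N)
      = (N - Ne : ℕ) := by
    simp
  simp_rw [← hshift, hunit] at hparseval
  rw [← sum_erase_add _ _ (mem_univ p), hp, norm_natCast] at hparseval
  simp only [one_pow, sum_const, Nat.card_Ico, nsmul_eq_mul, mul_one, Nat.cast_sub hNe] at hparseval
  linarith

section Independent

variable {Ω ι : Type*} [MeasurableSpace Ω] {P : Measure Ω} {S : ι → Ω → ℂ} {ρ : ℝ}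

theorem ProbabilityTheory.iIndepFun.integral_mul_conj_eq_ite [DecidableEq ι]
    (hindep : iIndepFun S P) (hL2 : ∀ k, MemLp (S k) 2 P) (hmean : ∀ k, ∫ ω, S k ω ∂P = 0)
    (hpow : ∀ k, ∫ ω, ‖S k ω‖ ^ 2 ∂P = ρ) (k l : ι) :
    ∫ ω, S k ω * conj (S l ω) ∂P = if k = l then (ρ : ℂ) else 0 := by
  split_ifs with hkl
  · subst hkl
    simp_rw [mul_conj', ← ofReal_pow, integral_complex_ofReal, hpow]
  · have hindep_kl : IndepFun (S k) (fun ω => conj (S l ω)) P :=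
      (hindep.indepFun hkl).comp measurable_id continuous_star.measurable
    rw [hindep_kl.integral_fun_mul_eq_mul_integral (hL2 k).1 (hL2 l).star.1, hmean, zero_mul]

theorem ProbabilityTheory.iIndepFun.integral_norm_sq_sum_mul (hindep : iIndepFun S P)
    (hL2 : ∀ k, MemLp (S k) 2 P) (hmean : ∀ k, ∫ ω, S k ω ∂P = 0)
    (hpow : ∀ k, ∫ ω, ‖S k ω‖ ^ 2 ∂P = ρ) (t : Finset ι) (a : ι → ℂ) :
    ∫ ω, ‖∑ k ∈ t, a k * S k ω‖ ^ 2 ∂P = (∑ k ∈ t, ‖a k‖ ^ 2) * ρ := by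
  classical
  have hint (k l : ι) : Integrable (fun ω => a k * conj (a l) * (S k ω * conj (S l ω))) P :=
    ((hL2 k).integrable_mul (hL2 l).star).const_mul _
  apply ofReal_injective
  rw [← integral_complex_ofReal]
  push_cast
  simp_rw [← mul_conj', map_sum, map_mul, sum_mul_sum]
  calc _ = ∫ ω, ∑ k ∈ t, ∑ l ∈ t, a k * conj (a l) * (S k ω * conj (S l ω)) ∂P := by
        congr with ω
        exact sum_congr rfl fun k _ => sum_congr rfl fun l _ => by ring
    _ = ∑ k ∈ t, ∑ l ∈ t, a k * conj (a l) * if k = l then (ρ : ℂ) else 0 := by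
        rw [integral_finsetSum _ fun k _ => integrable_finsetSum _ fun l _ => hint k l]
        refine sum_congr rfl fun k _ => ?_
        rw [integral_finsetSum _ fun l _ => hint k l]
        refine sum_congr rfl fun l _ => ?_
        rw [integral_const_mul, hindep.integral_mul_conj_eq_ite hL2 hmean hpow]
    _ = _ := by simp [sum_mul]

end Independent

theorem stmt_7_general {Ω : Type*} [MeasurableSpace Ω] (P : Measure Ω) [IsProbabilityMeasure P]
    (Nc Ne : ℕ) (hNe : Ne ≤ Nc) (p : Fin Nc)
    (S : Fin Nc → Ω → ℂ) (ρ : ℝ)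
    (hindep : iIndepFun S P)
    (hL2 : ∀ k, MemLp (S k) 2 P)
    (hmean : ∀ k, ∫ ω, S k ω ∂P = 0)
    (hpow : ∀ k, ∫ ω, ‖S k ω‖ ^ 2 ∂P = ρ)
    (d : Fin Nc → ℂ) (hd : ∀ k, ‖d k‖ = 1) (α : ℂ) :
    (∫ ω, ‖(α / (Nc : ℂ)) * ∑ i ∈ Finset.Ico Ne Nc, ∑ k ∈ Finset.univ.erase p,
        S k ω * d k * Complex.exp (2 * Real.pi * Complex.I * (((k : ℕ) : ℂ) - (((p : ℕ) : ℂ))) * (i : ℂ) / (Nc : ℂ))‖ ^ 2 ∂P)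
      = ((Ne : ℝ) / (Nc : ℝ)) * (1 - (Ne : ℝ) / (Nc : ℝ)) * ‖α‖ ^ 2 * ρ := by
  have hNc : (Nc : ℝ) ≠ 0 := Nat.cast_ne_zero.2 p.pos.ne'
  set c : Fin Nc → ℂ := fun k => ∑ i ∈ Ico Ne Nc,
    exp (2 * π * I * (((k : ℕ) : ℂ) - ((p : ℕ) : ℂ)) * i / Nc)
  have hIc (ω : Ω) : (α / (Nc : ℂ)) * ∑ i ∈ Ico Ne Nc, ∑ k ∈ univ.erase p,
      S k ω * d k * exp (2 * π * I * (((k : ℕ) : ℂ) - ((p : ℕ) : ℂ)) * i / Nc)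
      = ∑ k ∈ univ.erase p, α / Nc * d k * c k * S k ω := by
    simp only [c, sum_comm (s := Ico Ne Nc), mul_sum, sum_mul]
    exact sum_congr rfl fun k _ => sum_congr rfl fun i _ => by ring
  simp_rw [hIc, hindep.integral_norm_sq_sum_mul hL2 hmean hpow, norm_mul, norm_div, hd,
    Complex.norm_natCast, mul_one, mul_pow, ← mul_sum, c, sum_erase_norm_sq_sum_Ico_exp hNe p]
  field_simp

/-- Power of the ICI term (equation (21)): with i.i.d. zero-mean symbols `S k` of power `ρ`,
unit-modulus phases `d k` and gain `α / N_c`,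
`E[|I_c|²] = (N_e/N_c)(1 − N_e/N_c) |α|² ρ` where
`I_c = (α/N_c) ∑_{i=N_e}^{N_c−1} ∑_{k≠p} S_k d_k exp(2πi(k−p)i/N_c)`. -/
theorem stmt_7 {Ω : Type*} [MeasurableSpace Ω] (P : Measure Ω) [IsProbabilityMeasure P]
    (Nc Ne : ℕ) (hNc : 1 ≤ Nc) (hNe : Ne ≤ Nc) (p : Fin Nc)
    (S : Fin Nc → Ω → ℂ) (ρ : ℝ)
    (hmeas : ∀ k, Measurable (S k))
    (hindep : iIndepFun S P)
    (hL2 : ∀ k, MemLp (S k) 2 P)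
    (hmean : ∀ k, ∫ ω, S k ω ∂P = 0)
    (hpow : ∀ k, ∫ ω, ‖S k ω‖ ^ 2 ∂P = ρ)
    (d : Fin Nc → ℂ) (hd : ∀ k, ‖d k‖ = 1) (α : ℂ) :
    (∫ ω, ‖(α / (Nc : ℂ)) * ∑ i ∈ Finset.Ico Ne Nc, ∑ k ∈ Finset.univ.erase p,
        S k ω * d k * Complex.exp (2 * Real.pi * Complex.I * (((k : ℕ) : ℂ) - (((p : ℕ) : ℂ))) * (i : ℂ) / (Nc : ℂ))‖ ^ 2 ∂P)
      = ((Ne : ℝ) / (Nc : ℝ)) * (1 - (Ne : ℝ) / (Nc : ℝ)) * ‖α‖ ^ 2 * ρ :=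
  stmt_7_general P Nc Ne hNe p S ρ hindep hL2 hmean hpow d hd α
end

section
/- Fix real numbers e, B, γ₀ with 0 < e ≤ 1, |B| ≤ 1, γ₀ > 0 and 2B − 1 + e ≥ 0. Define N(x) = (1 − e)² + x² + 2x(1 − e)B and h₁(x) = x·((1 − x) − 2(1 − e)B) + e(2 − e) + (1 + x)/γ₀. Then h₁(x) > 0 for all x ∈ [0, e], and the function γ₂(x) = N(x)/h₁(x) is strictly monotonically increasing on the interval [0, e]. -/
/-- Remark 1: in the regime `0 ≤ x ≤ e`, the interference-plus-noise power
`h₁(x) = x((1−x) − 2(1−e)B) + e(2−e) + (1+x)/γ₀` is positive and the block SINR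
`γ₂(x) = ((1−e)² + x² + 2x(1−e)B)/h₁(x)` is strictly monotonically increasing on `[0, e]`. -/
theorem stmt_13 (e B γ₀ : ℝ) (he0 : 0 < e) (he1 : e ≤ 1) (hB : |B| ≤ 1) (hγ : 0 < γ₀)
    (hBe : 2 * B - 1 + e ≥ 0) :
    (∀ x ∈ Set.Icc (0 : ℝ) e,
      0 < x * ((1 - x) - 2 * (1 - e) * B) + e * (2 - e) + (1 + x) / γ₀) ∧
    StrictMonoOn
      (fun x : ℝ => ((1 - e) ^ 2 + x ^ 2 + 2 * x * (1 - e) * B) /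
        (x * ((1 - x) - 2 * (1 - e) * B) + e * (2 - e) + (1 + x) / γ₀))
      (Set.Icc (0 : ℝ) e) := by
  obtain ⟨hB1, hB2⟩ := abs_le.mp hB
  have hg : (0 : ℝ) < γ₀⁻¹ := inv_pos.mpr hγ
  have hpos : ∀ x ∈ Set.Icc (0 : ℝ) e,
      0 < x * ((1 - x) - 2 * (1 - e) * B) + e * (2 - e) + (1 + x) / γ₀ := by
    intro x ⟨hx0, hxe⟩
    have h1 : (1 + x) / γ₀ = (1 + x) * γ₀⁻¹ := div_eq_mul_inv _ _
    rw [h1]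
    have hx1 : x ≤ 1 := hxe.trans he1
    nlinarith [mul_nonneg hx0 (sub_nonneg.2 hxe), mul_nonneg (mul_nonneg hx0 (sub_nonneg.2 he1)) (sub_nonneg.2 hB2), mul_pos (by linarith : (0:ℝ) < 1 + x) hg, mul_nonneg (sub_nonneg.2 hxe) (sub_nonneg.2 he1)]
  refine ⟨hpos, ?_⟩
  intro x hx y hy hxy
  have hhx := hpos x hx
  have hhy := hpos y hy
  simp only
  rw [div_lt_div_iff₀ hhx hhy]
  have hdx : (1 + x) / γ₀ = (1 + x) * γ₀⁻¹ := div_eq_mul_inv _ _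
  have hdy : (1 + y) / γ₀ = (1 + y) * γ₀⁻¹ := div_eq_mul_inv _ _
  rw [hdx, hdy] at *
  obtain ⟨hx0, hxe⟩ := hx
  obtain ⟨hy0, hye⟩ := hy
  have key : ((1 - e) ^ 2 + y ^ 2 + 2 * y * (1 - e) * B) *
        (x * ((1 - x) - 2 * (1 - e) * B) + e * (2 - e) + (1 + x) * γ₀⁻¹) -
      ((1 - e) ^ 2 + x ^ 2 + 2 * x * (1 - e) * B) *
        (y * ((1 - y) - 2 * (1 - e) * B) + e * (2 - e) + (1 + y) * γ₀⁻¹) =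
      (y - x) * (1 + γ₀⁻¹) * ((1 - e) * (2 * B - 1 + e) + x + y + x * y) := by
    ring
  have hfac : 0 < (y - x) * (1 + γ₀⁻¹) * ((1 - e) * (2 * B - 1 + e) + x + y + x * y) := by
    have h1 : 0 < y - x := sub_pos.2 hxy
    have h2 : 0 < 1 + γ₀⁻¹ := by linarith
    have h3 : 0 < (1 - e) * (2 * B - 1 + e) + x + y + x * y := by
      have := mul_nonneg (sub_nonneg.2 he1) hBe
      have hy' : 0 < y := lt_of_le_of_lt hx0 hxy
      nlinarith [mul_nonneg hx0 hy0]
    positivity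
  linarith [key, hfac]
end

section
/- Fix real numbers e, s, B, γ₀ with 0 < e ≤ s ≤ 1, |B| ≤ 1, γ₀ > 0 and 1/γ₀ + 1 + 2B > 0. Define N(x) = (1 − e)² + x² + 2x(1 − e)B and h₂(x) = (1 − x)·(x − 2eB) + e(2 − e) + (1 + x)/γ₀. Then h₂(x) > 0 for all x ∈ [e, s], and the function γ₂(x) = N(x)/h₂(x) attains its maximum over the interval [e, s] at an endpoint: for every x ∈ [e, s], γ₂(x) ≤ max(γ₂(e), γ₂(s)). -/
/-- Remark 2: on `[e, s]` the denominator `h₂(x) = (1−x)(x − 2eB) + e(2−e) + (1+x)/γ₀`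
is positive and the block SINR `γ₂(x) = ((1−e)² + x² + 2x(1−e)B)/h₂(x)` attains its
maximum over `[e, s]` at an endpoint. -/
theorem stmt_16 (e s B γ₀ : ℝ) (he : 0 < e) (hes : e ≤ s) (hs : s ≤ 1) (hB : |B| ≤ 1)
    (hγ : 0 < γ₀) (hlead : 0 < 1 / γ₀ + 1 + 2 * B) :
    (∀ x ∈ Set.Icc e s,
      0 < (1 - x) * (x - 2 * e * B) + e * (2 - e) + (1 + x) / γ₀) ∧
    (∀ x ∈ Set.Icc e s,
      ((1 - e) ^ 2 + x ^ 2 + 2 * x * (1 - e) * B) /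
          ((1 - x) * (x - 2 * e * B) + e * (2 - e) + (1 + x) / γ₀)
        ≤ max
          (((1 - e) ^ 2 + e ^ 2 + 2 * e * (1 - e) * B) /
            ((1 - e) * (e - 2 * e * B) + e * (2 - e) + (1 + e) / γ₀))
          (((1 - e) ^ 2 + s ^ 2 + 2 * s * (1 - e) * B) /
            ((1 - s) * (s - 2 * e * B) + e * (2 - e) + (1 + s) / γ₀))) := by
  obtain ⟨hB1, hB2⟩ := abs_le.mp hB
  have hγi : 0 < 1 / γ₀ := by positivity
  have hpos : ∀ x ∈ Set.Icc e s,
      0 < (1 - x) * (x - 2 * e * B) + e * (2 - e) + (1 + x) / γ₀ := by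
    intro x ⟨hxe, hxs⟩
    have hx1 : x ≤ 1 := hxs.trans hs
    have hx0 : 0 < x := he.trans_le hxe
    have h1x : (0:ℝ) ≤ 1 - x := sub_nonneg.mpr hx1
    have h1 : 0 < (1 + x) / γ₀ := by positivity
    nlinarith [mul_nonneg (mul_nonneg he.le h1x) (sub_nonneg.mpr hB2),
      mul_nonneg hx0.le h1x, mul_nonneg he.le (sub_nonneg.mpr hxe)]
  refine ⟨hpos, ?_⟩
  intro x hx
  obtain ⟨hxe, hxs⟩ := hx
  set Ne := (1 - e) ^ 2 + e ^ 2 + 2 * e * (1 - e) * B with hNe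
  set Ns := (1 - e) ^ 2 + s ^ 2 + 2 * s * (1 - e) * B with hNs
  set Nx := (1 - e) ^ 2 + x ^ 2 + 2 * x * (1 - e) * B with hNx
  set He := (1 - e) * (e - 2 * e * B) + e * (2 - e) + (1 + e) / γ₀ with hHe
  set Hs := (1 - s) * (s - 2 * e * B) + e * (2 - e) + (1 + s) / γ₀ with hHs
  set Hx := (1 - x) * (x - 2 * e * B) + e * (2 - e) + (1 + x) / γ₀ with hHx
  have hHep : 0 < He := hpos e ⟨le_refl e, hes⟩
  have hHsp : 0 < Hs := hpos s ⟨hes, le_refl s⟩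
  have hHxp : 0 < Hx := hpos x ⟨hxe, hxs⟩
  set M := max (Ne / He) (Ns / Hs) with hM
  have hNe0 : 0 ≤ Ne := by
    have he1 : e ≤ 1 := hes.trans hs
    nlinarith [mul_nonneg (mul_nonneg he.le (sub_nonneg.mpr he1)) (sub_nonneg.mpr hB1),
      sq_nonneg (1 - 2*e)]
  have hM0 : 0 ≤ M := le_trans (by positivity) (le_max_left _ _)
  have h1 : Ne ≤ M * He := (div_le_iff₀ hHep).mp (le_max_left _ _)
  have h2 : Ns ≤ M * Hs := (div_le_iff₀ hHsp).mp (le_max_right _ _)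
  rw [div_le_iff₀ hHxp]
  -- key concavity identity: (M*Hx - Nx)*(s - e) =
  --   (M*He - Ne)*(s - x) + (M*Hs - Ns)*(x - e) + (M+1)*(x-e)*(s-x)*(s-e)
  rcases eq_or_lt_of_le hes with heq | hlt
  · have hxe' : x = e := le_antisymm (heq ▸ hxs) hxe
    subst hxe'
    linarith [h1]
  · have key : (M * Hx - Nx) * (s - e) =
        (M * He - Ne) * (s - x) + (M * Hs - Ns) * (x - e)
          + (M + 1) * (x - e) * (s - x) * (s - e) := by
      simp only [hNx, hNe, hNs, hHx, hHe, hHs, div_eq_mul_inv]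
      ring
    have t1 : 0 ≤ (M * He - Ne) * (s - x) :=
      mul_nonneg (sub_nonneg.mpr h1) (sub_nonneg.mpr hxs)
    have t2 : 0 ≤ (M * Hs - Ns) * (x - e) :=
      mul_nonneg (sub_nonneg.mpr h2) (sub_nonneg.mpr hxe)
    have t3 : 0 ≤ (M + 1) * (x - e) * (s - x) * (s - e) :=
      mul_nonneg (mul_nonneg (mul_nonneg (by linarith : (0:ℝ) ≤ M + 1)
        (sub_nonneg.mpr hxe)) (sub_nonneg.mpr hxs)) (sub_nonneg.mpr hlt.le)
    have h0 : 0 ≤ (M * Hx - Nx) * (s - e) := by rw [key]; linarith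
    have hfin := nonneg_of_mul_nonneg_left h0 (by linarith : (0:ℝ) < s - e)
    linarith [hfin]
end
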